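/- arXiv:2602.01775 — 2 statements merged into one kernel-verified Lean document; each statement's English description precedes it below -/
import Mathlib

section
/- Let Ē be a real V × d matrix, let C = (1/V) Ēᵀ * Ē, and suppose C = U * Λ * Uᵀ where U is a d × d orthogonal matrix and Λ = diag(λ_1, …, λ_d) with λ_1 ≥ … ≥ λ_d ≥ 0. Let W ∈ ℝ^{d × k} consist of the first k columns of U (k ≤ d), and set G_T = Ē * Ēᵀ and G_S = Ē * W * Wᵀ * Ēᵀ. Then the squared Frobenius norm of G_T − G_S equals V² · (λ_{k+1}² + λ_{k+2}² + … + λ_d²). -/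
open Matrix

/-- Gram-matrix error formula of Theorem 1(iii): with
`C = (1/V) Ēᵀ Ē = U (diag λ) Uᵀ` (`U` orthogonal, `λ` decreasing and
nonnegative), `W` the first `k` columns of `U`, `G_T = Ē Ēᵀ` and
`G_S = Ē W Wᵀ Ēᵀ`, one has `‖G_T − G_S‖_F² = V² (λ_{k+1}² + … + λ_d²)`. -/
theorem pca_gram_matrix_error
    {V d k : ℕ} (hV : 0 < V) (hk : k ≤ d)
    (Ebar : Matrix (Fin V) (Fin d) ℝ)
    (U : Matrix (Fin d) (Fin d) ℝ) (hU : Uᵀ * U = 1)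
    (lam : Fin d → ℝ) (hAnti : Antitone lam) (hNonneg : ∀ i, 0 ≤ lam i)
    (hC : (V : ℝ)⁻¹ • (Ebarᵀ * Ebar) = U * Matrix.diagonal lam * Uᵀ)
    (W : Matrix (Fin d) (Fin k) ℝ) (hW : W = U.submatrix id (Fin.castLE hk))
    (GT : Matrix (Fin V) (Fin V) ℝ) (hGT : GT = Ebar * Ebarᵀ)
    (GS : Matrix (Fin V) (Fin V) ℝ) (hGS : GS = Ebar * W * Wᵀ * Ebarᵀ) :
    Matrix.trace ((GT - GS)ᵀ * (GT - GS)) =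
      (V : ℝ) ^ 2 * ∑ i ∈ Finset.univ.filter (fun i : Fin d => k ≤ (i : ℕ)), (lam i) ^ 2 := by
  subst hW hGT hGS
  have hV' : (V : ℝ) ≠ 0 := Nat.cast_ne_zero.mpr hV.ne'
  set q : Fin d → ℝ := fun i => if k ≤ (i : ℕ) then 1 else 0 with hq
  have hUUT : U * Uᵀ = 1 := mul_eq_one_comm.mp hU
  -- W Wᵀ = U diag(p) Uᵀ with p indicator of i < k
  have hWW : (U.submatrix id (Fin.castLE hk)) * (U.submatrix id (Fin.castLE hk))ᵀ
      = U * Matrix.diagonal (fun i : Fin d => if (i : ℕ) < k then (1:ℝ) else 0) * Uᵀ := by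
    ext a b
    rw [show (U * Matrix.diagonal (fun i : Fin d => if (i : ℕ) < k then (1:ℝ) else 0) * Uᵀ) a b
        = ∑ j : Fin d, U a j * (if (j : ℕ) < k then (1:ℝ) else 0) * U b j from by
      rw [Matrix.mul_apply]
      refine Finset.sum_congr rfl fun x _ => ?_
      rw [Matrix.mul_diagonal, Matrix.transpose_apply]]
    simp only [Matrix.mul_apply, Matrix.transpose_apply, Matrix.submatrix_apply, id]
    have hmap : (Finset.univ.map (Fin.castLEEmb hk))
        = Finset.univ.filter (fun j : Fin d => (j : ℕ) < k) := by
      ext j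
      simp only [Finset.mem_map, Finset.mem_univ, true_and, Finset.mem_filter,
        Fin.castLEEmb_apply]
      constructor
      · rintro ⟨a, rfl⟩; exact a.isLt
      · intro h; exact ⟨⟨(j : ℕ), h⟩, by ext; simp⟩
    calc ∑ j : Fin k, U a (Fin.castLE hk j) * U b (Fin.castLE hk j)
        = ∑ j ∈ Finset.univ.map (Fin.castLEEmb hk), U a j * U b j := by
          rw [Finset.sum_map]; rfl
      _ = ∑ j ∈ Finset.univ.filter (fun j : Fin d => (j : ℕ) < k), U a j * U b j := by
          rw [hmap]
      _ = ∑ j : Fin d, U a j * (if (j : ℕ) < k then (1:ℝ) else 0) * U b j := by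
          rw [Finset.sum_filter]
          apply Finset.sum_congr rfl
          intro j _
          split <;> ring
  have hAA : Ebarᵀ * Ebar = (V : ℝ) • (U * Matrix.diagonal lam * Uᵀ) := by
    calc Ebarᵀ * Ebar = (V : ℝ) • ((V : ℝ)⁻¹ • (Ebarᵀ * Ebar)) := by
          rw [smul_smul, mul_inv_cancel₀ hV', one_smul]
      _ = _ := by rw [hC]
  -- 1 - W Wᵀ = U diag(q) Uᵀ
  have hM : (1 : Matrix (Fin d) (Fin d) ℝ) - (U.submatrix id (Fin.castLE hk)) * (U.submatrix id (Fin.castLE hk))ᵀ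
      = U * Matrix.diagonal q * Uᵀ := by
    rw [hWW, ← hUUT]
    have : Matrix.diagonal q = 1 - Matrix.diagonal (fun i : Fin d => if (i : ℕ) < k then (1:ℝ) else 0) := by
      ext i j
      rcases eq_or_ne i j with rfl | h
      · simp only [Matrix.sub_apply, Matrix.diagonal_apply_eq, Matrix.one_apply_eq, hq]
        rcases lt_or_ge (i : ℕ) k with h' | h'
        · simp [h', Nat.not_le.mpr h']
        · simp [h', Nat.not_lt.mpr h']
      · simp [Matrix.diagonal_apply_ne _ h, Matrix.one_apply_ne h]
    rw [this]
    noncomm_ring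
  set B := Ebar * U with hB
  have hBtB : Bᵀ * B = (V : ℝ) • Matrix.diagonal lam := by
    rw [hB, Matrix.transpose_mul, Matrix.mul_assoc, ← Matrix.mul_assoc Ebarᵀ, hAA]
    calc Uᵀ * ((V : ℝ) • (U * Matrix.diagonal lam * Uᵀ) * U)
        = (V : ℝ) • (Uᵀ * U * Matrix.diagonal lam * (Uᵀ * U)) := by
          simp only [Matrix.smul_mul, Matrix.mul_smul, Matrix.mul_assoc]
      _ = (V : ℝ) • Matrix.diagonal lam := by rw [hU, Matrix.one_mul, Matrix.mul_one]
  have hdiff : Ebar * Ebarᵀ - Ebar * (U.submatrix id (Fin.castLE hk)) * (U.submatrix id (Fin.castLE hk))ᵀ * Ebarᵀ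
      = B * Matrix.diagonal q * Bᵀ := by
    have : Ebar * Ebarᵀ - Ebar * (U.submatrix id (Fin.castLE hk)) * (U.submatrix id (Fin.castLE hk))ᵀ * Ebarᵀ
        = Ebar * ((1 : Matrix (Fin d) (Fin d) ℝ) - (U.submatrix id (Fin.castLE hk)) * (U.submatrix id (Fin.castLE hk))ᵀ) * Ebarᵀ := by
      rw [Matrix.mul_sub, Matrix.mul_one, Matrix.sub_mul]
      simp only [Matrix.mul_assoc]
    rw [this, hM, hB]
    simp only [Matrix.transpose_mul, Matrix.mul_assoc]
  rw [hdiff]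
  have hsymm : (B * Matrix.diagonal q * Bᵀ)ᵀ = B * Matrix.diagonal q * Bᵀ := by
    simp [Matrix.transpose_mul, Matrix.diagonal_transpose, Matrix.mul_assoc]
  rw [hsymm]
  have : B * Matrix.diagonal q * Bᵀ * (B * Matrix.diagonal q * Bᵀ)
      = B * (Matrix.diagonal q * (Bᵀ * B) * (Matrix.diagonal q * Bᵀ)) := by
    simp only [Matrix.mul_assoc]
  rw [this, Matrix.trace_mul_comm]
  have : Matrix.diagonal q * (Bᵀ * B) * (Matrix.diagonal q * Bᵀ) * B
      = Matrix.diagonal q * (Bᵀ * B) * (Matrix.diagonal q * (Bᵀ * B)) := by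
    simp only [Matrix.mul_assoc]
  rw [this, hBtB]
  simp only [Matrix.mul_smul, Matrix.smul_mul, smul_smul, Matrix.trace_smul,
    Matrix.diagonal_mul_diagonal]
  rw [Matrix.trace_diagonal]
  rw [Finset.sum_filter, smul_eq_mul, Finset.mul_sum, Finset.mul_sum]
  apply Finset.sum_congr rfl
  intro i _
  simp only [hq]
  split <;> ring
end

section
/- Let Ē be a real V × d matrix, let C = (1/V) Ēᵀ * Ē, and suppose C = U * Λ * Uᵀ where U is a d × d orthogonal matrix and Λ = diag(λ_1, …, λ_d) with λ_1 ≥ … ≥ λ_d ≥ 0. Fix k ≤ d and let W* ∈ ℝ^{d × k} consist of the first k columns of U. Then for every real d × k matrix W with orthonormal columns (Wᵀ * W = I_k), ‖Ē * Ēᵀ − Ē * W * Wᵀ * Ēᵀ‖_F² ≥ ‖Ē * Ēᵀ − Ē * W* * (W*)ᵀ * Ēᵀ‖_F² = V² · (λ_{k+1}² + … + λ_d²). That is, the PCA projection W* achieves the minimum Gram-matrix (inner-product) distortion over all rank-k orthonormal projections. -/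
open Matrix Finset Module

/-! ### Auxiliary lemmas -/

lemma trace_transpose_mul_self {n : ℕ} (A : Matrix (Fin n) (Fin n) ℝ) :
    Matrix.trace (Aᵀ * A) = ∑ i, ∑ j, (A j i) ^ 2 := by
  simp [Matrix.trace, Matrix.diag, Matrix.mul_apply, sq]

lemma trace_transpose_mul_self_nonneg {n : ℕ} (A : Matrix (Fin n) (Fin n) ℝ) :
    0 ≤ Matrix.trace (Aᵀ * A) := by
  rw [trace_transpose_mul_self]
  apply Finset.sum_nonneg; intro i _; apply Finset.sum_nonneg; intro j _; positivity

lemma card_le_trace_aux {n r : ℕ} (F : Matrix (Fin n) (Fin n) ℝ) (X : Matrix (Fin n) (Fin r) ℝ)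
    (hFX : F * X = X) (hGu : IsUnit (Xᵀ * X)) :
    (r : ℝ) ≤ Matrix.trace (Fᵀ * F) := by
  set G := Xᵀ * X with hG
  have hdet : IsUnit G.det := (Matrix.isUnit_iff_isUnit_det G).mp hGu
  have hGinv1 : G * G⁻¹ = 1 := Matrix.mul_nonsing_inv G hdet
  have hGsym : Gᵀ = G := by rw [hG, Matrix.transpose_mul, Matrix.transpose_transpose]
  have hGinvsym : (G⁻¹)ᵀ = G⁻¹ := by rw [Matrix.transpose_nonsing_inv, hGsym]
  set P := X * G⁻¹ * Xᵀ with hP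
  have hPsym : Pᵀ = P := by
    rw [hP, Matrix.transpose_mul, Matrix.transpose_mul, Matrix.transpose_transpose, hGinvsym,
      Matrix.mul_assoc]
  have hFP : F * P = P := by
    rw [hP, ← Matrix.mul_assoc, ← Matrix.mul_assoc, hFX]
  have hPP : P * P = P := by
    calc P * P = X * G⁻¹ * (Xᵀ * X) * G⁻¹ * Xᵀ := by
          rw [hP]; simp only [Matrix.mul_assoc]
      _ = P := by rw [← hG, Matrix.mul_assoc (X * G⁻¹) G G⁻¹, hGinv1, Matrix.mul_one, hP]
  have htrP : Matrix.trace P = (r : ℝ) := by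
    rw [hP, Matrix.trace_mul_comm, ← Matrix.mul_assoc, ← hG, hGinv1, Matrix.trace_one]
    simp
  have hQQ : (1 - P) * (1 - P) = 1 - P := by
    have e : (1 - P) * (1 - P) = 1 - P - P + P * P := by noncomm_ring
    rw [e, hPP]; abel
  have hkey : Matrix.trace ((F * (1 - P))ᵀ * (F * (1 - P)))
      = Matrix.trace (Fᵀ * F) - (r : ℝ) := by
    have e1 : (F * (1 - P))ᵀ * (F * (1 - P)) = (1 - P)ᵀ * (Fᵀ * F * (1 - P)) := by
      rw [Matrix.transpose_mul]; simp only [Matrix.mul_assoc]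
    rw [e1, Matrix.trace_mul_comm]
    have hQsym : (1 - P)ᵀ = 1 - P := by rw [Matrix.transpose_sub, Matrix.transpose_one, hPsym]
    rw [hQsym, Matrix.mul_assoc (Fᵀ * F) (1 - P) (1 - P), hQQ]
    rw [Matrix.mul_sub, Matrix.mul_one, Matrix.trace_sub]
    have e2 : Fᵀ * F * P = Fᵀ * P := by rw [Matrix.mul_assoc, hFP]
    rw [e2]
    have e3 : Fᵀ * P = (Pᵀ * F)ᵀ := by rw [Matrix.transpose_mul, Matrix.transpose_transpose]
    rw [e3, Matrix.trace_transpose, hPsym, Matrix.trace_mul_comm P F, hFP, htrP]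
  have h0 := trace_transpose_mul_self_nonneg (F * (1 - P))
  rw [hkey] at h0
  linarith

lemma finrank_le_trace_of_fixed {n : ℕ} (F : Matrix (Fin n) (Fin n) ℝ)
    (M : Submodule ℝ (Fin n → ℝ)) (hfix : ∀ x ∈ M, F.mulVec x = x) :
    (finrank ℝ M : ℝ) ≤ Matrix.trace (Fᵀ * F) := by
  set r := finrank ℝ M with hr
  let b : Basis (Fin r) ℝ M := finBasis ℝ M
  set X : Matrix (Fin n) (Fin r) ℝ := Matrix.of (fun i l => (b l : Fin n → ℝ) i) with hX
  have hFX : F * X = X := by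
    ext i l
    have h1 : F.mulVec (fun i => X i l) = fun i => X i l := hfix _ (b l).2
    have h2 := congrFun h1 i
    simpa [Matrix.mul_apply, Matrix.mulVec, dotProduct] using h2
  have hXinj : ∀ v : Fin r → ℝ, X.mulVec v = 0 → v = 0 := by
    intro v hv
    have hsum : ∑ l, v l • (b l) = (0 : M) := by
      apply Subtype.ext
      have hc : ((∑ l, v l • (b l) : M) : Fin n → ℝ) = ∑ l, v l • ((b l : Fin n → ℝ)) := by
        simp
      rw [hc]
      funext i
      have := congrFun hv i
      simpa [hX, Matrix.mulVec, dotProduct, mul_comm, Finset.sum_apply] using this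
    have := Fintype.linearIndependent_iff.mp b.linearIndependent v hsum
    funext l; exact this l
  have hGu : IsUnit (Xᵀ * X) := by
    set G := Xᵀ * X with hG
    rw [← Matrix.mulVec_injective_iff_isUnit]
    intro v w hvw
    have h0 : G.mulVec (v - w) = 0 := by
      rw [Matrix.mulVec_sub, hvw, sub_self]
    have hGv : (X.mulVec (v - w)) ⬝ᵥ (X.mulVec (v - w)) = 0 := by
      have h1 : (v - w) ⬝ᵥ G.mulVec (v - w) = 0 := by rw [h0, dotProduct_zero]
      rw [hG, ← Matrix.mulVec_mulVec, Matrix.dotProduct_mulVec, Matrix.vecMul_transpose] at h1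
      exact h1
    have hXv : X.mulVec (v - w) = 0 := by
      funext i
      have hterm : ∀ i ∈ Finset.univ, (0:ℝ) ≤ X.mulVec (v - w) i * X.mulVec (v - w) i :=
        fun i _ => mul_self_nonneg _
      have := (Finset.sum_eq_zero_iff_of_nonneg hterm).mp hGv i (Finset.mem_univ i)
      exact mul_self_eq_zero.mp this
    have h2 := hXinj _ hXv
    rwa [sub_eq_zero] at h2
  exact card_le_trace_aux F X hFX hGu

noncomputable def ind {d : ℕ} (t : Fin d) (i : Fin d) : ℝ := if i.val ≤ t.val then 1 else 0

lemma ind_sq {d : ℕ} (t i : Fin d) : ind t i * ind t i = ind t i := by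
  unfold ind; by_cases h : i.val ≤ t.val <;> simp [h]

lemma ind_nonneg {d : ℕ} (t i : Fin d) : 0 ≤ ind t i := by
  unfold ind; by_cases h : i.val ≤ t.val <;> simp [h]

lemma ind_mono {d : ℕ} {s t : Fin d} (h : s ≤ t) (i : Fin d) : ind s i ≤ ind t i := by
  unfold ind
  by_cases h1 : i.val ≤ s.val
  · rw [if_pos h1, if_pos (le_trans h1 h)]
  · rw [if_neg h1]; by_cases h2 : i.val ≤ t.val <;> simp [h2]

def coordSub {d : ℕ} (t : Fin d) : Submodule ℝ (Fin d → ℝ) where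
  carrier := {x | ∀ i : Fin d, t < i → x i = 0}
  add_mem' := by intro a b ha hb i hi; simp [ha i hi, hb i hi]
  zero_mem' := fun i hi => rfl
  smul_mem' := by intro c x hx i hi; simp [hx i hi]

lemma mem_coordSub {d : ℕ} {t : Fin d} {x : Fin d → ℝ} :
    x ∈ coordSub t ↔ ∀ i : Fin d, t < i → x i = 0 := Iff.rfl

lemma coordSub_finrank_ge {d : ℕ} (t : Fin d) :
    t.val + 1 ≤ finrank ℝ (coordSub t) := by
  have hle : t.val + 1 ≤ d := t.isLt
  set emb : Fin (t.val + 1) → Fin d := Fin.castLE hle with hemb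
  have hembinj : Function.Injective emb := Fin.castLE_injective hle
  have hmem : ∀ j : Fin (t.val + 1), (Pi.single (emb j) 1 : Fin d → ℝ) ∈ coordSub t := by
    intro j
    rw [mem_coordSub]
    intro i hi
    apply Pi.single_eq_of_ne
    intro hne
    rw [hne] at hi
    have : (emb j).val ≤ t.val := by simp [emb, Fin.castLE]; omega
    have := Fin.lt_def.mp hi
    omega
  set v : Fin (t.val + 1) → coordSub t := fun j => ⟨Pi.single (emb j) 1, hmem j⟩ with hv
  have hind : LinearIndependent ℝ v := by
    apply LinearIndependent.of_comp (coordSub t).subtype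
    have : ((coordSub t).subtype ∘ v) = (fun i : Fin d => (Pi.single i 1 : Fin d → ℝ)) ∘ emb := by
      funext j; rfl
    rw [this]
    apply LinearIndependent.comp _ emb hembinj
    have hbf : (fun i : Fin d => (Pi.single i 1 : Fin d → ℝ))
        = fun i => Pi.basisFun ℝ (Fin d) i := by
      funext i; simp
    rw [hbf]
    exact (Pi.basisFun ℝ (Fin d)).linearIndependent
  have := LinearIndependent.fintype_card_le_finrank hind
  simpa using this

lemma step_bound {d k : ℕ} (R : Matrix (Fin d) (Fin d) ℝ)
    (K : Submodule ℝ (Fin d → ℝ)) (hKdim : d ≤ finrank ℝ K + k)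
    (hfix : ∀ x ∈ K, R.mulVec x = x) (t : Fin d) :
    ((Finset.univ.filter (fun i : Fin d => k ≤ i.val ∧ i.val ≤ t.val)).card : ℝ)
      ≤ ∑ i, ∑ j, ind t i * ind t j * R i j ^ 2 := by
  classical
  set F := Matrix.diagonal (ind t) * R * Matrix.diagonal (ind t) with hFdef
  have hF : ∀ i j, F i j = ind t i * R i j * ind t j := by
    intro i j
    rw [hFdef, Matrix.mul_diagonal, Matrix.diagonal_mul]
  set M := K ⊓ coordSub t with hM
  have hfixM : ∀ x ∈ M, F.mulVec x = x := by
    intro x hx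
    obtain ⟨hxK, hxT⟩ := hx
    have hDt : (Matrix.diagonal (ind t)).mulVec x = x := by
      funext i
      rw [Matrix.mulVec_diagonal]
      by_cases h : i.val ≤ t.val
      · rw [show ind t i = 1 from if_pos h, one_mul]
      · have hx0 : x i = 0 := (mem_coordSub.mp hxT) i (by rw [Fin.lt_def]; omega)
        rw [hx0, mul_zero]
    rw [hFdef, ← Matrix.mulVec_mulVec, ← Matrix.mulVec_mulVec, hDt, hfix x hxK, hDt]
  have h1 : (finrank ℝ M : ℝ) ≤ Matrix.trace (Fᵀ * F) := finrank_le_trace_of_fixed F M hfixM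
  have h2 : Matrix.trace (Fᵀ * F) = ∑ i, ∑ j, ind t i * ind t j * R i j ^ 2 := by
    rw [trace_transpose_mul_self]
    rw [Finset.sum_comm]
    apply Finset.sum_congr rfl; intro i _
    apply Finset.sum_congr rfl; intro j _
    rw [hF]
    calc (ind t i * R i j * ind t j) ^ 2
        = (ind t i * ind t i) * (ind t j * ind t j) * R i j ^ 2 := by ring
      _ = ind t i * ind t j * R i j ^ 2 := by rw [ind_sq, ind_sq]
  have hcard : ((Finset.univ.filter (fun i : Fin d => k ≤ i.val ∧ i.val ≤ t.val)).card : ℕ)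
      ≤ finrank ℝ M := by
    have hc1 : (Finset.univ.filter (fun i : Fin d => k ≤ i.val ∧ i.val ≤ t.val)).card
        ≤ (Finset.Ico k (t.val + 1)).card := by
      apply Finset.card_le_card_of_injOn Fin.val
      · intro a ha
        simp only [Finset.mem_coe, Finset.mem_filter, Finset.mem_univ, true_and] at ha
        simp only [Finset.mem_coe, Finset.mem_Ico]; omega
      · exact Fin.val_injective.injOn
    rw [Nat.card_Ico] at hc1
    have hsup := Submodule.finrank_sup_add_finrank_inf_eq K (coordSub t)
    have hsuple : finrank ℝ (K ⊔ coordSub t : Submodule ℝ (Fin d → ℝ)) ≤ d := by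
      have := Submodule.finrank_le (K ⊔ coordSub t)
      rwa [Module.finrank_pi, Fintype.card_fin] at this
    have hT := coordSub_finrank_ge t
    rw [hM]
    omega
  calc ((Finset.univ.filter (fun i : Fin d => k ≤ i.val ∧ i.val ≤ t.val)).card : ℝ)
      ≤ (finrank ℝ M : ℝ) := by exact_mod_cast hcard
    _ ≤ Matrix.trace (Fᵀ * F) := h1
    _ = _ := h2

lemma swap4 {α : Type*} [Fintype α] (f : α → α → α → α → ℝ) :
    ∑ i : α, ∑ j : α, ∑ t : α, ∑ t' : α, f i j t t'
      = ∑ t : α, ∑ t' : α, ∑ i : α, ∑ j : α, f i j t t' := by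
  calc ∑ i : α, ∑ j : α, ∑ t : α, ∑ t' : α, f i j t t'
      = ∑ i : α, ∑ t : α, ∑ j : α, ∑ t' : α, f i j t t' :=
        Finset.sum_congr rfl fun i _ => Finset.sum_comm
    _ = ∑ t : α, ∑ i : α, ∑ j : α, ∑ t' : α, f i j t t' := Finset.sum_comm
    _ = ∑ t : α, ∑ i : α, ∑ t' : α, ∑ j : α, f i j t t' :=
        Finset.sum_congr rfl fun t _ => Finset.sum_congr rfl fun i _ => Finset.sum_comm
    _ = ∑ t : α, ∑ t' : α, ∑ i : α, ∑ j : α, f i j t t' :=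
        Finset.sum_congr rfl fun t _ => Finset.sum_comm

lemma bilin_expand {d : ℕ} (A : Fin d → Fin d → ℝ) (lam a : Fin d → ℝ)
    (h : ∀ i, lam i = ∑ t, a t * ind t i) :
    ∑ i, ∑ j, A i j * lam i * lam j
      = ∑ t, ∑ t', a t * a t' * ∑ i, ∑ j, A i j * (ind t i * ind t' j) := by
  calc ∑ i, ∑ j, A i j * lam i * lam j
      = ∑ i, ∑ j, ∑ t, ∑ t', A i j * (a t * ind t i) * (a t' * ind t' j) := by
        apply Finset.sum_congr rfl; intro i _
        apply Finset.sum_congr rfl; intro j _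
        rw [h i, h j, Finset.mul_sum, Finset.sum_comm]
        apply Finset.sum_congr rfl; intro t _
        rw [Finset.mul_sum, Finset.sum_mul]
    _ = ∑ t, ∑ t', ∑ i, ∑ j, A i j * (a t * ind t i) * (a t' * ind t' j) :=
        swap4 (fun i j t t' => A i j * (a t * ind t i) * (a t' * ind t' j))
    _ = ∑ t, ∑ t', a t * a t' * ∑ i, ∑ j, A i j * (ind t i * ind t' j) := by
        apply Finset.sum_congr rfl; intro t _
        apply Finset.sum_congr rfl; intro t' _
        rw [Finset.mul_sum]
        apply Finset.sum_congr rfl; intro i _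
        rw [Finset.mul_sum]
        apply Finset.sum_congr rfl; intro j _
        ring

lemma exists_decomp {d : ℕ} (lam : Fin d → ℝ) (hAnti : Antitone lam)
    (hNonneg : ∀ i, 0 ≤ lam i) :
    ∃ a : Fin d → ℝ, (∀ t, 0 ≤ a t) ∧ ∀ i, lam i = ∑ t, a t * ind t i := by
  classical
  set g : ℕ → ℝ := fun n => if h : n < d then lam ⟨n, h⟩ else 0 with hg
  refine ⟨fun t => g t.val - g (t.val + 1), ?_, ?_⟩
  · intro t
    simp only []
    show 0 ≤ g t.val - g (t.val + 1)
    have h1 : g t.val = lam t := by simp [hg, t.isLt]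
    by_cases h : t.val + 1 < d
    · have h2 : g (t.val + 1) = lam ⟨t.val + 1, h⟩ := by simp [hg, h]
      have h3 : lam ⟨t.val + 1, h⟩ ≤ lam t := hAnti (by rw [Fin.le_def]; simp)
      rw [h1, h2]; linarith
    · have h2 : g (t.val + 1) = 0 := by simp [hg, h]
      rw [h1, h2]; simpa using hNonneg t
  · intro i
    have step1 : ∑ t : Fin d, (g t.val - g (t.val + 1)) * ind t i
        = ∑ n ∈ Finset.range d, (if i.val ≤ n then g n - g (n + 1) else 0) := by
      rw [← Fin.sum_univ_eq_sum_range (fun n => if i.val ≤ n then g n - g (n + 1) else 0) d]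
      apply Finset.sum_congr rfl; intro t _
      unfold ind
      by_cases h : i.val ≤ t.val <;> simp [h]
    have step2 : ∑ n ∈ Finset.range d, (if i.val ≤ n then g n - g (n + 1) else 0)
        = ∑ n ∈ Finset.Ico i.val d, (g n - g (n + 1)) := by
      rw [← Finset.sum_filter]
      congr 1
      ext n
      simp [Finset.mem_filter, Finset.mem_Ico, Finset.mem_range]
      omega
    have step3 : ∑ n ∈ Finset.Ico i.val d, (g n - g (n + 1)) = g i.val - g d := by
      rw [Finset.sum_Ico_eq_sub _ (le_of_lt i.isLt)]
      rw [Finset.sum_range_sub' g d, Finset.sum_range_sub' g i.val]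
      ring
    rw [step1, step2, step3]
    simp [hg, i.isLt]

lemma pair_bound {d k : ℕ} (R : Matrix (Fin d) (Fin d) ℝ)
    (K : Submodule ℝ (Fin d → ℝ)) (hKdim : d ≤ finrank ℝ K + k)
    (hfix : ∀ x ∈ K, R.mulVec x = x) (t t' : Fin d) :
    0 ≤ ∑ i, ∑ j, (R i j ^ 2 - (if i = j ∧ k ≤ i.val then 1 else 0)) * (ind t i * ind t' j) := by
  classical
  set m : Fin d := if t.val ≤ t'.val then t else t' with hm
  have hmt : m ≤ t := by
    rw [hm, Fin.le_def]; split <;> omega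
  have hmt' : m ≤ t' := by
    rw [hm, Fin.le_def]; split <;> omega
  have hmiff : ∀ i : Fin d, i.val ≤ m.val ↔ (i.val ≤ t.val ∧ i.val ≤ t'.val) := by
    intro i; rw [hm]; split <;> constructor <;> intro hh <;> omega
  have hsplit : ∑ i, ∑ j, (R i j ^ 2 - (if i = j ∧ k ≤ i.val then (1:ℝ) else 0))
        * (ind t i * ind t' j)
      = (∑ i, ∑ j, R i j ^ 2 * (ind t i * ind t' j))
        - ∑ i, ∑ j, (if i = j ∧ k ≤ i.val then (1:ℝ) else 0) * (ind t i * ind t' j) := by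
    simp only [sub_mul, Finset.sum_sub_distrib]
  have h1 : ∑ i, ∑ j, (if i = j ∧ k ≤ i.val then (1:ℝ) else 0) * (ind t i * ind t' j)
      = ((Finset.univ.filter (fun i : Fin d => k ≤ i.val ∧ i.val ≤ m.val)).card : ℝ) := by
    have hinner : ∀ i : Fin d,
        ∑ j, (if i = j ∧ k ≤ i.val then (1:ℝ) else 0) * (ind t i * ind t' j)
          = (if k ≤ i.val ∧ i.val ≤ m.val then (1:ℝ) else 0) := by
      intro i
      have hterm : ∀ j : Fin d, (if i = j ∧ k ≤ i.val then (1:ℝ) else 0) * (ind t i * ind t' j)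
          = if j = i then (if k ≤ i.val then (1:ℝ) else 0) * (ind t i * ind t' i) else 0 := by
        intro j
        by_cases hji : j = i
        · subst hji; by_cases hki : k ≤ j.val <;> simp [hki]
        · have : ¬ (i = j ∧ k ≤ i.val) := fun hc => hji hc.1.symm
          rw [if_neg this, if_neg hji, zero_mul]
      rw [Finset.sum_congr rfl (fun j _ => hterm j), Finset.sum_ite_eq' Finset.univ i]
      simp only [Finset.mem_univ, if_true]
      unfold ind
      by_cases hki : k ≤ i.val
      · by_cases h2 : i.val ≤ m.val
        · obtain ⟨ht, ht'⟩ := (hmiff i).mp h2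
          rw [if_pos ht, if_pos ht', if_pos hki, if_pos ⟨hki, h2⟩]; ring
        · have hnot : ¬ (i.val ≤ t.val ∧ i.val ≤ t'.val) := fun hc => h2 ((hmiff i).mpr hc)
          rw [if_neg (fun hc : k ≤ i.val ∧ i.val ≤ m.val => h2 hc.2)]
          by_cases ht : i.val ≤ t.val
          · have ht' : ¬ i.val ≤ t'.val := fun hc => hnot ⟨ht, hc⟩
            rw [if_neg ht']; ring
          · rw [if_neg ht]; ring
      · simp [hki]
    rw [Finset.sum_congr rfl (fun i _ => hinner i)]
    rw [Finset.sum_boole]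
  have h2 := step_bound R K hKdim hfix m
  have h3 : ∑ i, ∑ j, ind m i * ind m j * R i j ^ 2
      ≤ ∑ i, ∑ j, R i j ^ 2 * (ind t i * ind t' j) := by
    apply Finset.sum_le_sum; intro i _
    apply Finset.sum_le_sum; intro j _
    calc ind m i * ind m j * R i j ^ 2
        ≤ (ind t i * ind t' j) * R i j ^ 2 := by
          apply mul_le_mul_of_nonneg_right _ (sq_nonneg _)
          exact mul_le_mul (ind_mono hmt i) (ind_mono hmt' j) (ind_nonneg m j) (ind_nonneg t i)
      _ = R i j ^ 2 * (ind t i * ind t' j) := mul_comm _ _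
  rw [hsplit, h1]
  linarith

lemma diag_double_sum {d k : ℕ} (lam : Fin d → ℝ) :
    ∑ i, ∑ j, (if i = j ∧ k ≤ i.val then (1:ℝ) else 0) * lam i * lam j
      = ∑ i ∈ Finset.univ.filter (fun i : Fin d => k ≤ (i : ℕ)), (lam i) ^ 2 := by
  classical
  have hinner : ∀ i : Fin d, ∑ j, (if i = j ∧ k ≤ i.val then (1:ℝ) else 0) * lam i * lam j
      = if k ≤ i.val then lam i ^ 2 else 0 := by
    intro i
    have hterm : ∀ j : Fin d, (if i = j ∧ k ≤ i.val then (1:ℝ) else 0) * lam i * lam j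
        = if j = i then (if k ≤ i.val then lam i ^ 2 else 0) else 0 := by
      intro j
      by_cases hji : j = i
      · subst hji; by_cases hki : k ≤ j.val <;> simp [hki] <;> ring
      · have : ¬ (i = j ∧ k ≤ i.val) := fun hc => hji hc.1.symm
        rw [if_neg this, if_neg hji, zero_mul, zero_mul]
    rw [Finset.sum_congr rfl (fun j _ => hterm j), Finset.sum_ite_eq' Finset.univ i]
    simp only [Finset.mem_univ, if_true]
  rw [Finset.sum_congr rfl (fun i _ => hinner i), ← Finset.sum_filter]

lemma main_ineq {d k : ℕ} (R : Matrix (Fin d) (Fin d) ℝ)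
    (K : Submodule ℝ (Fin d → ℝ)) (hKdim : d ≤ finrank ℝ K + k)
    (hfix : ∀ x ∈ K, R.mulVec x = x) (lam : Fin d → ℝ) (hAnti : Antitone lam)
    (hNonneg : ∀ i, 0 ≤ lam i) :
    ∑ i ∈ Finset.univ.filter (fun i : Fin d => k ≤ (i : ℕ)), (lam i) ^ 2
      ≤ ∑ i, ∑ j, R i j ^ 2 * lam i * lam j := by
  classical
  obtain ⟨a, ha0, hdec⟩ := exists_decomp lam hAnti hNonneg
  set A : Fin d → Fin d → ℝ := fun i j => R i j ^ 2 - (if i = j ∧ k ≤ i.val then 1 else 0)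
    with hA
  have hpos : 0 ≤ ∑ i, ∑ j, A i j * lam i * lam j := by
    rw [bilin_expand A lam a hdec]
    apply Finset.sum_nonneg; intro t _
    apply Finset.sum_nonneg; intro t' _
    exact mul_nonneg (mul_nonneg (ha0 t) (ha0 t')) (pair_bound R K hKdim hfix t t')
  have hsplit : ∑ i, ∑ j, A i j * lam i * lam j
      = (∑ i, ∑ j, R i j ^ 2 * lam i * lam j)
        - ∑ i, ∑ j, (if i = j ∧ k ≤ i.val then (1:ℝ) else 0) * lam i * lam j := by
    simp only [hA, sub_mul, Finset.sum_sub_distrib]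
  rw [hsplit, diag_double_sum lam] at hpos
  linarith

lemma trace_reduce {V d k : ℕ} (hV : 0 < V)
    (Ebar : Matrix (Fin V) (Fin d) ℝ)
    (U : Matrix (Fin d) (Fin d) ℝ)
    (lam : Fin d → ℝ)
    (hC : (V : ℝ)⁻¹ • (Ebarᵀ * Ebar) = U * Matrix.diagonal lam * Uᵀ)
    (W : Matrix (Fin d) (Fin k) ℝ) :
    Matrix.trace ((Ebar * Ebarᵀ - Ebar * W * Wᵀ * Ebarᵀ)ᵀ *
        (Ebar * Ebarᵀ - Ebar * W * Wᵀ * Ebarᵀ))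
      = (V : ℝ) ^ 2 * ∑ i, ∑ j,
          ((Uᵀ * (1 - W * Wᵀ) * U : Matrix (Fin d) (Fin d) ℝ) i j) ^ 2 * lam i * lam j := by
  classical
  set Q : Matrix (Fin d) (Fin d) ℝ := 1 - W * Wᵀ with hQ
  have hQsym : Qᵀ = Q := by
    rw [hQ, Matrix.transpose_sub, Matrix.transpose_one, Matrix.transpose_mul,
      Matrix.transpose_transpose]
  set R : Matrix (Fin d) (Fin d) ℝ := Uᵀ * Q * U with hR
  have hRsym : Rᵀ = R := by
    rw [hR, Matrix.transpose_mul, Matrix.transpose_mul, Matrix.transpose_transpose, hQsym,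
      Matrix.mul_assoc]
  set B : Matrix (Fin V) (Fin V) ℝ := Ebar * Ebarᵀ - Ebar * W * Wᵀ * Ebarᵀ with hB
  have hBQ : B = Ebar * Q * Ebarᵀ := by
    rw [hB, hQ, Matrix.mul_sub, Matrix.mul_one, Matrix.sub_mul]
    simp only [Matrix.mul_assoc]
  have hBsym : Bᵀ = B := by
    rw [hBQ, Matrix.transpose_mul, Matrix.transpose_mul, Matrix.transpose_transpose, hQsym,
      Matrix.mul_assoc]
  set S : Matrix (Fin d) (Fin d) ℝ := Ebarᵀ * Ebar with hS
  have hSlam : S = (V : ℝ) • (U * Matrix.diagonal lam * Uᵀ) := by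
    rw [← hC, smul_smul]
    rw [mul_inv_cancel₀ (by exact_mod_cast hV.ne' : (V:ℝ) ≠ 0), one_smul]
  have step1 : Matrix.trace (Bᵀ * B) = Matrix.trace (Q * S * (Q * S)) := by
    rw [hBsym, hBQ]
    have e1 : Ebar * Q * Ebarᵀ * (Ebar * Q * Ebarᵀ) = Ebar * (Q * S * (Q * Ebarᵀ)) := by
      rw [hS]; simp only [Matrix.mul_assoc]
    rw [e1, Matrix.trace_mul_comm]
    have e2 : Q * S * (Q * Ebarᵀ) * Ebar = Q * S * (Q * S) := by
      rw [hS]; simp only [Matrix.mul_assoc]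
    rw [e2]
  have step2 : Matrix.trace (Q * S * (Q * S))
      = (V:ℝ)^2 * Matrix.trace (Q * (U * Matrix.diagonal lam * Uᵀ)
          * (Q * (U * Matrix.diagonal lam * Uᵀ))) := by
    rw [hSlam]
    simp only [Matrix.mul_smul, Matrix.smul_mul, Matrix.trace_smul, smul_eq_mul, smul_smul]
    ring
  have step3 : Matrix.trace (Q * (U * Matrix.diagonal lam * Uᵀ)
        * (Q * (U * Matrix.diagonal lam * Uᵀ)))
      = Matrix.trace (R * Matrix.diagonal lam * (R * Matrix.diagonal lam)) := by
    have e1 : Q * (U * Matrix.diagonal lam * Uᵀ) * (Q * (U * Matrix.diagonal lam * Uᵀ))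
        = (Q * (U * Matrix.diagonal lam * (Uᵀ * (Q * (U * Matrix.diagonal lam))))) * Uᵀ := by
      simp only [Matrix.mul_assoc]
    rw [e1, Matrix.trace_mul_comm]
    have e2 : Uᵀ * (Q * (U * Matrix.diagonal lam * (Uᵀ * (Q * (U * Matrix.diagonal lam)))))
        = R * Matrix.diagonal lam * (R * Matrix.diagonal lam) := by
      rw [hR]; simp only [Matrix.mul_assoc]
    rw [e2]
  have step4 : Matrix.trace (R * Matrix.diagonal lam * (R * Matrix.diagonal lam))
      = ∑ i, ∑ j, R i j ^ 2 * lam i * lam j := by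
    have hdiag : ∀ i j, (R * Matrix.diagonal lam) i j = R i j * lam j := by
      intro i j; rw [Matrix.mul_diagonal]
    rw [Matrix.trace]
    have hdg : ∀ i, (R * Matrix.diagonal lam * (R * Matrix.diagonal lam)).diag i
        = ∑ j, (R i j * lam j) * (R j i * lam i) := by
      intro i
      rw [Matrix.diag_apply, Matrix.mul_apply]
      exact Finset.sum_congr rfl fun j _ => by rw [hdiag, hdiag]
    rw [Finset.sum_congr rfl (fun i _ => hdg i)]
    apply Finset.sum_congr rfl; intro i _
    apply Finset.sum_congr rfl; intro j _
    have hsym : R j i = R i j := by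
      have := congrFun (congrFun hRsym i) j
      rw [Matrix.transpose_apply] at this
      exact this
    rw [hsym]; ring
  rw [step1, step2, step3, step4]

lemma rstar_entries {d k : ℕ} (hk : k ≤ d)
    (U : Matrix (Fin d) (Fin d) ℝ) (hU : Uᵀ * U = 1)
    (Wstar : Matrix (Fin d) (Fin k) ℝ) (hWstar : Wstar = U.submatrix id (Fin.castLE hk)) :
    ∀ i j, (Uᵀ * (1 - Wstar * Wstarᵀ) * U : Matrix (Fin d) (Fin d) ℝ) i j
      = if i = j ∧ k ≤ i.val then 1 else 0 := by
  classical
  have hJ : ∀ (i : Fin d) (l : Fin k),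
      (Uᵀ * Wstar : Matrix (Fin d) (Fin k) ℝ) i l
        = (1 : Matrix (Fin d) (Fin d) ℝ) i (Fin.castLE hk l) := by
    intro i l
    rw [← hU]
    rw [hWstar]
    simp [Matrix.mul_apply, Matrix.submatrix_apply]
  have hMstar : ∀ i j, (Uᵀ * (Wstar * Wstarᵀ) * U : Matrix (Fin d) (Fin d) ℝ) i j
      = if i = j ∧ i.val < k then 1 else 0 := by
    have hfact : Uᵀ * (Wstar * Wstarᵀ) * U = (Uᵀ * Wstar) * (Uᵀ * Wstar)ᵀ := by
      rw [Matrix.transpose_mul, Matrix.transpose_transpose]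
      simp only [Matrix.mul_assoc]
    intro i j
    rw [hfact, Matrix.mul_apply]
    have hterm : ∀ l : Fin k, (Uᵀ * Wstar) i l * ((Uᵀ * Wstar)ᵀ) l j
        = (if i = Fin.castLE hk l then (1:ℝ) else 0)
          * (if j = Fin.castLE hk l then (1:ℝ) else 0) := by
      intro l
      rw [Matrix.transpose_apply, hJ, hJ, Matrix.one_apply, Matrix.one_apply]
    rw [Finset.sum_congr rfl (fun l _ => hterm l)]
    by_cases hij : i = j
    · subst hij
      by_cases hik : i.val < k
      · set l0 : Fin k := ⟨i.val, hik⟩ with hl0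
        have hcond : ∀ l : Fin k, (i = Fin.castLE hk l) ↔ (l = l0) := by
          intro l
          rw [Fin.ext_iff, Fin.ext_iff]
          simp [hl0, Fin.castLE]
          omega
        have hterm2 : ∀ l : Fin k,
            (if i = Fin.castLE hk l then (1:ℝ) else 0)
              * (if i = Fin.castLE hk l then (1:ℝ) else 0)
              = if l = l0 then (1:ℝ) else 0 := by
          intro l
          by_cases h : l = l0
          · rw [if_pos ((hcond l).mpr h), if_pos h, mul_one]
          · rw [if_neg (fun hc => h ((hcond l).mp hc)), zero_mul, if_neg h]
        rw [Finset.sum_congr rfl (fun l _ => hterm2 l), Finset.sum_ite_eq' Finset.univ l0]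
        simp [hik]
      · rw [Finset.sum_eq_zero, if_neg (fun hc => hik hc.2)]
        intro l _
        have : ¬ (i = Fin.castLE hk l) := by
          intro hc
          rw [Fin.ext_iff] at hc
          simp [Fin.castLE] at hc
          omega
        rw [if_neg this, zero_mul]
    · rw [Finset.sum_eq_zero, if_neg (fun hc => hij hc.1)]
      intro l _
      by_cases h1 : i = Fin.castLE hk l
      · have h2 : ¬ (j = Fin.castLE hk l) := fun hc => hij (h1.trans hc.symm)
        rw [if_neg h2, mul_zero]
      · rw [if_neg h1, zero_mul]
  intro i j
  have hexp : Uᵀ * (1 - Wstar * Wstarᵀ) * U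
      = 1 - Uᵀ * (Wstar * Wstarᵀ) * U := by
    rw [Matrix.mul_sub, Matrix.mul_one, Matrix.sub_mul, hU]
  rw [hexp, Matrix.sub_apply, hMstar, Matrix.one_apply]
  by_cases hij : i = j
  · subst hij
    by_cases hik : i.val < k
    · rw [if_pos rfl, if_pos ⟨rfl, hik⟩, if_neg (fun hc => by omega : ¬ (i = i ∧ k ≤ i.val))]
      norm_num
    · rw [if_pos rfl, if_neg (fun hc => hik hc.2), if_pos ⟨rfl, by omega⟩]
      norm_num
  · rw [if_neg hij, if_neg (fun hc => hij hc.1), if_neg (fun hc => hij hc.1)]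
    norm_num

/-- Full optimality claim of Theorem 1(iii): with
`C = (1/V) Ēᵀ Ē = U (diag λ) Uᵀ` (`U` orthogonal, `λ` decreasing and
nonnegative) and `W* ` the first `k` columns of `U`, for every `d × k` matrix
`W` with orthonormal columns,
`‖Ē Ēᵀ − Ē W Wᵀ Ēᵀ‖_F² ≥ ‖Ē Ēᵀ − Ē W* W*ᵀ Ēᵀ‖_F² = V² (λ_{k+1}² + … + λ_d²)`:
the PCA projection minimizes the Gram-matrix distortion. -/
theorem pca_minimizes_gram_distortion
    {V d k : ℕ} (hV : 0 < V) (hk : k ≤ d)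
    (Ebar : Matrix (Fin V) (Fin d) ℝ)
    (U : Matrix (Fin d) (Fin d) ℝ) (hU : Uᵀ * U = 1)
    (lam : Fin d → ℝ) (hAnti : Antitone lam) (hNonneg : ∀ i, 0 ≤ lam i)
    (hC : (V : ℝ)⁻¹ • (Ebarᵀ * Ebar) = U * Matrix.diagonal lam * Uᵀ)
    (Wstar : Matrix (Fin d) (Fin k) ℝ) (hWstar : Wstar = U.submatrix id (Fin.castLE hk)) :
    (∀ W : Matrix (Fin d) (Fin k) ℝ, Wᵀ * W = 1 →
      Matrix.trace ((Ebar * Ebarᵀ - Ebar * Wstar * Wstarᵀ * Ebarᵀ)ᵀ *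
          (Ebar * Ebarᵀ - Ebar * Wstar * Wstarᵀ * Ebarᵀ)) ≤
        Matrix.trace ((Ebar * Ebarᵀ - Ebar * W * Wᵀ * Ebarᵀ)ᵀ *
          (Ebar * Ebarᵀ - Ebar * W * Wᵀ * Ebarᵀ))) ∧
    Matrix.trace ((Ebar * Ebarᵀ - Ebar * Wstar * Wstarᵀ * Ebarᵀ)ᵀ *
        (Ebar * Ebarᵀ - Ebar * Wstar * Wstarᵀ * Ebarᵀ)) =
      (V : ℝ) ^ 2 * ∑ i ∈ Finset.univ.filter (fun i : Fin d => k ≤ (i : ℕ)), (lam i) ^ 2 := by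
  classical
  have hstar : Matrix.trace ((Ebar * Ebarᵀ - Ebar * Wstar * Wstarᵀ * Ebarᵀ)ᵀ *
        (Ebar * Ebarᵀ - Ebar * Wstar * Wstarᵀ * Ebarᵀ)) =
      (V : ℝ) ^ 2 * ∑ i ∈ Finset.univ.filter (fun i : Fin d => k ≤ (i : ℕ)), (lam i) ^ 2 := by
    rw [trace_reduce hV Ebar U lam hC Wstar]
    congr 1
    rw [← diag_double_sum lam]
    apply Finset.sum_congr rfl; intro i _
    apply Finset.sum_congr rfl; intro j _
    rw [rstar_entries hk U hU Wstar hWstar i j]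
    by_cases h : i = j ∧ k ≤ i.val
    · rw [if_pos h]; norm_num
    · rw [if_neg h]; norm_num
  refine ⟨?_, hstar⟩
  intro W _
  rw [hstar, trace_reduce hV Ebar U lam hC W]
  apply mul_le_mul_of_nonneg_left _ (by positivity)
  set K : Submodule ℝ (Fin d → ℝ) := LinearMap.ker (Matrix.mulVecLin (Wᵀ * U)) with hK
  have hKdim : d ≤ finrank ℝ K + k := by
    have h1 := LinearMap.finrank_range_add_finrank_ker (Matrix.mulVecLin (Wᵀ * U))
    have h2 : finrank ℝ (LinearMap.range (Matrix.mulVecLin (Wᵀ * U))) ≤ k := by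
      have := Submodule.finrank_le (LinearMap.range (Matrix.mulVecLin (Wᵀ * U)))
      rwa [Module.finrank_pi, Fintype.card_fin] at this
    rw [Module.finrank_pi, Fintype.card_fin] at h1
    show d ≤ finrank ℝ (LinearMap.ker (Matrix.mulVecLin (Wᵀ * U))) + k
    omega
  have hfix : ∀ x ∈ K, (Uᵀ * (1 - W * Wᵀ) * U : Matrix (Fin d) (Fin d) ℝ).mulVec x = x := by
    intro x hx
    have hx0 : (Wᵀ * U).mulVec x = 0 := by
      have := LinearMap.mem_ker.mp hx
      rwa [Matrix.mulVecLin_apply] at this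
    have hQx : (1 - W * Wᵀ : Matrix (Fin d) (Fin d) ℝ).mulVec (U.mulVec x) = U.mulVec x := by
      rw [Matrix.sub_mulVec, Matrix.one_mulVec]
      have hz : (W * Wᵀ).mulVec (U.mulVec x) = 0 := by
        calc (W * Wᵀ).mulVec (U.mulVec x)
            = W.mulVec (Wᵀ.mulVec (U.mulVec x)) := (Matrix.mulVec_mulVec _ W Wᵀ).symm
          _ = W.mulVec ((Wᵀ * U).mulVec x) := by rw [Matrix.mulVec_mulVec x Wᵀ U]
          _ = 0 := by rw [hx0, Matrix.mulVec_zero]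
      rw [hz, sub_zero]
    calc (Uᵀ * (1 - W * Wᵀ) * U).mulVec x
        = Uᵀ.mulVec ((1 - W * Wᵀ).mulVec (U.mulVec x)) := by
          rw [Matrix.mulVec_mulVec, Matrix.mulVec_mulVec, Matrix.mul_assoc]
      _ = Uᵀ.mulVec (U.mulVec x) := by rw [hQx]
      _ = x := by rw [Matrix.mulVec_mulVec, hU, Matrix.one_mulVec]
  exact main_ineq (Uᵀ * (1 - W * Wᵀ) * U) K hKdim hfix lam hAnti hNonneg
end
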